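/- Let P, Q, R, S ∈ B_A(H). Then ω_𝔸([[P,Q],[R,S]]) ≤ √(2ω_A²(P) + (1/2)(‖P^{♯_A}Q‖_A + ‖Q‖_A²)) + √(2ω_A²(S) + (1/2)(‖S^{♯_A}R‖_A + ‖R‖_A²)). -/

import Mathlib

/-!
For `v = (x, y)`, `⟨𝔸 [[P,Q],[R,S]] v, v⟩` splits into four terms bounded by `ω_A(P)‖x‖_A²`,
`‖Q‖_A‖y‖_A‖x‖_A`, `‖R‖_A‖x‖_A‖y‖_A` and `ω_A(S)‖y‖_A²`. Since `‖x‖_A² + ‖y‖_A² = 1`, this gives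
`ω_𝔸 ≤ (ω_A(P) + ‖Q‖_A / 2) + (ω_A(S) + ‖R‖_A / 2)`, and `w + q / 2 ≤ √(2w² + q² / 2)` by AM–GM.

The suprema involved are finite because an operator `T` with a solution `T^♯` of `AX = T*A` is
`A`-bounded: `‖Tx‖_A² = ⟨A T^♯T x, x⟩ ≤ ‖T^♯T‖ ‖x‖_A²` by Reid's inequality `⟨ABx, x⟩ ≤ ‖B‖⟨Ax, x⟩`
for `AB` selfadjoint. That inequality follows by iterating Cauchy–Schwarz for the semi-inner product
`⟨A·, ·⟩ = ⟨A^{1/2}·, A^{1/2}·⟩` along the powers `B^{2^n}`, whose norms are at most `‖B‖^{2^n}`.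
-/

open ContinuousLinearMap

/-- The `A`-seminorm of a vector: `‖x‖_A = √⟨Ax, x⟩`. -/
noncomputable def vnormA {H : Type*} [NormedAddCommGroup H] [InnerProductSpace ℂ H]
    (A : H →L[ℂ] H) (x : H) : ℝ :=
  Real.sqrt (RCLike.re (inner ℂ (A x) x : ℂ))

/-- `T` is `A`-bounded, i.e. `T ∈ B_{A^{1/2}}(H)`. -/
def ABounded {H : Type*} [NormedAddCommGroup H] [InnerProductSpace ℂ H]
    (A T : H →L[ℂ] H) : Prop :=
  ∃ c : ℝ, 0 < c ∧ ∀ x, vnormA A (T x) ≤ c * vnormA A x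

/-- The `A`-operator seminorm `‖T‖_A = sup{‖Tx‖_A : ‖x‖_A = 1}`. -/
noncomputable def opNormA {H : Type*} [NormedAddCommGroup H] [InnerProductSpace ℂ H]
    (A T : H →L[ℂ] H) : ℝ :=
  sSup {c : ℝ | ∃ x : H, vnormA A x = 1 ∧ c = vnormA A (T x)}

/-- The `A`-numerical radius `ω_A(T) = sup{|⟨ATx, x⟩| : ‖x‖_A = 1}`. -/
noncomputable def wA {H : Type*} [NormedAddCommGroup H] [InnerProductSpace ℂ H]
    (A T : H →L[ℂ] H) : ℝ :=
  sSup {c : ℝ | ∃ x : H, vnormA A x = 1 ∧ c = ‖(inner ℂ (A (T x)) x : ℂ)‖}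

/-- `Ts` is the reduced (Douglas) solution of `AX = T*A`, i.e. `Ts = T^{♯_A}`. -/
def IsReducedAdjoint {H : Type*} [NormedAddCommGroup H] [InnerProductSpace ℂ H]
    [CompleteSpace H] (A T Ts : H →L[ℂ] H) : Prop :=
  A ∘L Ts = (ContinuousLinearMap.adjoint T) ∘L A ∧
    ∀ y, Ts y ∈ closure (Set.range A)

/-- The `2 × 2` operator matrix `[[P, Q], [R, S]]` acting on `H ⊕ H` (with the `ℓ²` product
inner product). -/
noncomputable def blk {H : Type*} [NormedAddCommGroup H] [InnerProductSpace ℂ H]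
    (P Q R S : H →L[ℂ] H) : WithLp 2 (H × H) →L[ℂ] WithLp 2 (H × H) :=
  letI e := (WithLp.prodContinuousLinearEquiv 2 ℂ H H)
  (e.symm.toContinuousLinearMap) ∘L
    ((P.comp (fst ℂ H H) + Q.comp (snd ℂ H H)).prod
      (R.comp (fst ℂ H H) + S.comp (snd ℂ H H))) ∘L
    (e.toContinuousLinearMap)

/-- `𝔸 = diag(A, A)` on `H ⊕ H`. -/
noncomputable def AA {H : Type*} [NormedAddCommGroup H] [InnerProductSpace ℂ H]
    (A : H →L[ℂ] H) : WithLp 2 (H × H) →L[ℂ] WithLp 2 (H × H) :=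
  blk A 0 0 A

open Filter Topology

theorem IsSelfAdjoint.mul_pow {R : Type*} [Monoid R] [StarMul R] {a b : R}
    (ha : IsSelfAdjoint a) (hab : IsSelfAdjoint (a * b)) (n : ℕ) : IsSelfAdjoint (a * b ^ n) := by
  have key : ∀ n : ℕ, a * b ^ n = star (b ^ n) * a := by
    intro n
    induction n with
    | zero => simp
    | succ n ih =>
      rw [pow_succ, ← mul_assoc, ih, mul_assoc, ← hab.star_eq, star_mul, ha.star_eq, ← mul_assoc,
        ← star_mul, ← pow_succ', pow_succ]
  rw [IsSelfAdjoint, star_mul, ha.star_eq, key]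

theorem le_of_forall_pow_two_pow_le {u r K : ℝ} (hr : 0 ≤ r)
    (h : ∀ n : ℕ, u ^ 2 ^ n ≤ K * r ^ 2 ^ n) : u ≤ r := by
  by_contra! hru
  have hu : 0 < u := hr.trans_lt hru
  have hlim : Tendsto (fun n : ℕ => K * (r / u) ^ 2 ^ n) atTop (𝓝 0) := by
    simpa using ((tendsto_pow_atTop_nhds_zero_of_lt_one (div_nonneg hr hu.le)
      ((div_lt_one hu).2 hru)).comp (tendsto_pow_atTop_atTop_of_one_lt one_lt_two)).const_mul K
  obtain ⟨n, hn⟩ := (hlim.eventually (gt_mem_nhds one_pos)).exists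
  rw [div_pow, mul_div_assoc', div_lt_one (by positivity)] at hn
  linarith [h n]

/-- The numerical core of Reid's inequality. -/
theorem le_mul_of_sq_le_succ_mul {u : ℕ → ℝ} {v r K : ℝ} (hv : 0 ≤ v) (hr : 0 ≤ r)
    (hstep : ∀ n, u n ^ 2 ≤ u (n + 1) * v) (hbound : ∀ n, u n ≤ K * r ^ 2 ^ n) :
    u 0 ≤ r * v := by
  rcases le_or_gt (u 0) 0 with hu0 | hu0
  · exact hu0.trans (mul_nonneg hr hv)
  rcases hv.eq_or_lt with rfl | hv
  · nlinarith [hstep 0]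
  have hpow : ∀ n, (u 0 / v) ^ 2 ^ n ≤ u n / v := by
    intro n
    induction n with
    | zero => simp
    | succ n ih =>
      calc (u 0 / v) ^ 2 ^ (n + 1) = ((u 0 / v) ^ 2 ^ n) ^ 2 := by rw [pow_succ, pow_mul]
        _ ≤ (u n / v) ^ 2 := pow_le_pow_left₀ (by positivity) ih 2
        _ ≤ u (n + 1) / v := by
          rw [div_pow, div_le_div_iff₀ (by positivity) hv]
          nlinarith [hstep n]
  have := le_of_forall_pow_two_pow_le (K := K / v) hr fun n =>
    (hpow n).trans (by rw [div_mul_eq_mul_div]; gcongr; exact hbound n)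
  rwa [div_le_iff₀ hv] at this

section Seminorm

variable {H : Type*} [NormedAddCommGroup H] [InnerProductSpace ℂ H]

theorem vnormA_smul_ofReal (A : H →L[ℂ] H) (c : ℝ) (x : H) :
    vnormA A ((c : ℂ) • x) = |c| * vnormA A x := by
  have h : inner ℂ (A ((c : ℂ) • x)) ((c : ℂ) • x) = ((c ^ 2 : ℝ) : ℂ) * inner ℂ (A x) x := by
    rw [map_smul, inner_smul_left, inner_smul_right, Complex.conj_ofReal]
    push_cast
    ring
  rw [vnormA, vnormA, h, RCLike.re_to_complex, Complex.re_ofReal_mul, Real.sqrt_mul (sq_nonneg c),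
    Real.sqrt_sq_eq_abs]
  rfl

theorem vnormA_nonneg (A : H →L[ℂ] H) (x : H) : 0 ≤ vnormA A x := Real.sqrt_nonneg _

theorem vnormA_sq {A : H →L[ℂ] H} (hA : A.IsPositive) (x : H) :
    vnormA A x ^ 2 = RCLike.re (inner ℂ (A x) x) :=
  Real.sq_sqrt (hA.re_inner_nonneg_left x)

theorem opNormA_nonneg (A T : H →L[ℂ] H) : 0 ≤ opNormA A T :=
  Real.sSup_nonneg (by rintro c ⟨x, -, rfl⟩; exact vnormA_nonneg A _)

theorem wA_nonneg (A T : H →L[ℂ] H) : 0 ≤ wA A T :=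
  Real.sSup_nonneg (by rintro c ⟨x, -, rfl⟩; exact norm_nonneg _)

theorem le_sSup_mul_vnormA_pow (A : H →L[ℂ] H) {g : H → ℝ} {k : ℕ} {M : ℝ} (hk : k ≠ 0)
    (hg : ∀ (c : ℝ) x, g ((c : ℂ) • x) = |c| ^ k * g x) (hM : ∀ x, g x ≤ M * vnormA A x ^ k)
    (x : H) : g x ≤ sSup {c | ∃ y, vnormA A y = 1 ∧ c = g y} * vnormA A x ^ k := by
  rcases (vnormA_nonneg A x).eq_or_lt with h0 | hpos
  · simpa [← h0, zero_pow hk] using hM x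
  set t := vnormA A x
  have hunit : vnormA A (((t⁻¹ : ℝ) : ℂ) • x) = 1 := by
    rw [vnormA_smul_ofReal, abs_of_pos (inv_pos.2 hpos), inv_mul_cancel₀ hpos.ne']
  have hbdd : BddAbove {c | ∃ y, vnormA A y = 1 ∧ c = g y} :=
    ⟨M, by rintro c ⟨y, hy, rfl⟩; simpa [hy] using hM y⟩
  have hle := le_csSup hbdd ⟨_, hunit, rfl⟩
  rw [hg, abs_of_pos (inv_pos.2 hpos), inv_pow, inv_mul_le_iff₀ (by positivity)] at hle
  linarith

theorem ABounded.vnormA_apply_le {A T : H →L[ℂ] H} (hT : ABounded A T) (x : H) :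
    vnormA A (T x) ≤ opNormA A T * vnormA A x := by
  obtain ⟨c, -, hc⟩ := hT
  have := le_sSup_mul_vnormA_pow A (g := fun x => vnormA A (T x)) one_ne_zero
    (fun c x => by rw [map_smul, vnormA_smul_ofReal, pow_one]) (by simpa using hc) x
  rwa [pow_one] at this

end Seminorm

section Positive

variable {H : Type*} [NormedAddCommGroup H] [InnerProductSpace ℂ H] [CompleteSpace H]
  {A : H →L[ℂ] H}

theorem inner_apply_eq_inner_sqrt (hA : A.IsPositive) (x y : H) :
    inner ℂ (A x) y = inner ℂ (CFC.sqrt A x) (CFC.sqrt A y) := by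
  conv_lhs => rw [← CFC.sqrt_mul_sqrt_self A ((nonneg_iff_isPositive A).2 hA)]
  rw [mul_apply_eq_comp, ← adjoint_inner_right, (CFC.sqrt_nonneg A).isSelfAdjoint.adjoint_eq]

theorem vnormA_eq_norm_sqrt (hA : A.IsPositive) (x : H) : vnormA A x = ‖CFC.sqrt A x‖ := by
  rw [vnormA, inner_apply_eq_inner_sqrt hA, inner_self_eq_norm_sq, Real.sqrt_sq (norm_nonneg _)]

theorem norm_inner_apply_le_vnormA_mul (hA : A.IsPositive) (x y : H) :
    ‖inner ℂ (A x) y‖ ≤ vnormA A x * vnormA A y := by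
  rw [inner_apply_eq_inner_sqrt hA, vnormA_eq_norm_sqrt hA, vnormA_eq_norm_sqrt hA]
  exact norm_inner_le_norm _ _

theorem ABounded.norm_inner_apply_le (hA : A.IsPositive) {T : H →L[ℂ] H} (hT : ABounded A T)
    (x y : H) : ‖inner ℂ (A (T x)) y‖ ≤ opNormA A T * vnormA A x * vnormA A y :=
  (norm_inner_apply_le_vnormA_mul hA _ _).trans <|
    mul_le_mul_of_nonneg_right (hT.vnormA_apply_le x) (vnormA_nonneg A y)

theorem ABounded.norm_inner_le_wA (hA : A.IsPositive) {T : H →L[ℂ] H} (hT : ABounded A T)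
    (x : H) : ‖inner ℂ (A (T x)) x‖ ≤ wA A T * vnormA A x ^ 2 := by
  refine le_sSup_mul_vnormA_pow A (g := fun x => ‖inner ℂ (A (T x)) x‖) (M := opNormA A T)
    two_ne_zero (fun c x => ?_) (fun x => ?_) x
  · simp only [map_smul, inner_smul_left, inner_smul_right, Complex.conj_ofReal, norm_mul,
      Complex.norm_real, Real.norm_eq_abs]
    ring
  · simpa [sq, mul_assoc] using hT.norm_inner_apply_le hA x x

theorem re_inner_sq_le_of_isSelfAdjoint_mul (hA : A.IsPositive) {C : H →L[ℂ] H}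
    (hC : IsSelfAdjoint (A * C)) (x : H) :
    RCLike.re (inner ℂ (A (C x)) x) ^ 2 ≤
      RCLike.re (inner ℂ (A ((C * C) x)) x) * RCLike.re (inner ℂ (A x) x) := by
  have hCS : |RCLike.re (inner ℂ (A (C x)) x)| ≤ vnormA A (C x) * vnormA A x :=
    (Complex.abs_re_le_norm _).trans (norm_inner_apply_le_vnormA_mul hA _ _)
  have hCx : vnormA A (C x) ^ 2 = RCLike.re (inner ℂ (A ((C * C) x)) x) := by
    rw [vnormA_sq hA, ← mul_apply_eq_comp, ← hC.adjoint_eq, adjoint_inner_left, inner_re_symm]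
    rfl
  rw [← hCx, ← vnormA_sq hA, ← mul_pow, ← sq_abs]
  exact pow_le_pow_left₀ (abs_nonneg _) hCS 2

/-- Reid's inequality. -/
theorem re_inner_apply_le_norm_mul (hA : A.IsPositive) {B : H →L[ℂ] H}
    (hAB : IsSelfAdjoint (A * B)) (x : H) :
    RCLike.re (inner ℂ (A (B x)) x) ≤ ‖B‖ * RCLike.re (inner ℂ (A x) x) := by
  let u : ℕ → ℝ := fun n => RCLike.re (inner ℂ (A ((B ^ 2 ^ n) x)) x)
  have hstep : ∀ n, u n ^ 2 ≤ u (n + 1) * RCLike.re (inner ℂ (A x) x) := fun n => by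
    have := re_inner_sq_le_of_isSelfAdjoint_mul hA (hA.isSelfAdjoint.mul_pow hAB (2 ^ n)) x
    rwa [← pow_add, ← two_mul, ← pow_succ'] at this
  have hbound : ∀ n, u n ≤ ‖A‖ * ‖x‖ ^ 2 * ‖B‖ ^ 2 ^ n := fun n =>
    calc u n ≤ ‖inner ℂ (A ((B ^ 2 ^ n) x)) x‖ := RCLike.re_le_norm _
      _ ≤ ‖A‖ * (‖B ^ 2 ^ n‖ * ‖x‖) * ‖x‖ := by
          grw [norm_inner_le_norm, A.le_opNorm, (B ^ 2 ^ n).le_opNorm]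
      _ ≤ ‖A‖ * ‖x‖ ^ 2 * ‖B‖ ^ 2 ^ n := by
          grw [norm_pow_le' B (by positivity)]
          exact le_of_eq (by ring)
  simpa [u] using le_mul_of_sq_le_succ_mul (hA.re_inner_nonneg_left x) (norm_nonneg B) hstep hbound

theorem IsReducedAdjoint.vnormA_apply_sq_le (hA : A.IsPositive) {T Ts : H →L[ℂ] H}
    (hT : IsReducedAdjoint A T Ts) (x : H) :
    vnormA A (T x) ^ 2 ≤ ‖Ts * T‖ * vnormA A x ^ 2 := by
  have hAT : A * (Ts * T) = adjoint T * A * T := by rw [← mul_assoc]; exact congrArg (· * T) hT.1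
  have hsa : IsSelfAdjoint (A * (Ts * T)) := by
    rw [hAT, mul_assoc]
    exact (hA.adjoint_conj T).isSelfAdjoint
  have hx : adjoint T (A (T x)) = A ((Ts * T) x) := (congrArg (· x) hAT).symm
  rw [vnormA_sq hA, vnormA_sq hA, ← adjoint_inner_left, hx]
  exact re_inner_apply_le_norm_mul hA hsa x

theorem IsReducedAdjoint.aBounded (hA : A.IsPositive) {T Ts : H →L[ℂ] H}
    (hT : IsReducedAdjoint A T Ts) : ABounded A T := by
  refine ⟨√‖Ts * T‖ + 1, by positivity, fun x => ?_⟩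
  have hsq : vnormA A (T x) ^ 2 ≤ (√‖Ts * T‖ * vnormA A x) ^ 2 := by
    rw [mul_pow, Real.sq_sqrt (norm_nonneg _)]
    exact hT.vnormA_apply_sq_le hA x
  have hx := vnormA_nonneg A x
  calc vnormA A (T x) ≤ √‖Ts * T‖ * vnormA A x :=
        (pow_le_pow_iff_left₀ (vnormA_nonneg A _) (by positivity) two_ne_zero).1 hsq
    _ ≤ (√‖Ts * T‖ + 1) * vnormA A x := by gcongr; linarith

end Positive

theorem mul_sq_add_mul_add_mul_sq_le {p q s a b : ℝ} (hp : 0 ≤ p) (hq : 0 ≤ q) (hs : 0 ≤ s)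
    (hab : a ^ 2 + b ^ 2 = 1) : p * a ^ 2 + q * (a * b) + s * b ^ 2 ≤ p + q / 2 + s := by
  nlinarith [mul_nonneg hp (sq_nonneg b), mul_nonneg hs (sq_nonneg a),
    mul_nonneg hq (sq_nonneg (a - b))]

theorem add_half_le_sqrt {p : ℝ} (w q : ℝ) (hp : 0 ≤ p) :
    w + q / 2 ≤ √(2 * w ^ 2 + 1 / 2 * (p + q ^ 2)) :=
  Real.le_sqrt_of_sq_le (by nlinarith [sq_nonneg (w - q / 2)])

section Block

variable {H : Type*} [NormedAddCommGroup H] [InnerProductSpace ℂ H]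

theorem blk_apply_fst (P Q R S : H →L[ℂ] H) (v : WithLp 2 (H × H)) :
    (blk P Q R S v).ofLp.1 = P v.ofLp.1 + Q v.ofLp.2 := rfl

theorem blk_apply_snd (P Q R S : H →L[ℂ] H) (v : WithLp 2 (H × H)) :
    (blk P Q R S v).ofLp.2 = R v.ofLp.1 + S v.ofLp.2 := rfl

theorem inner_AA_apply (A : H →L[ℂ] H) (w v : WithLp 2 (H × H)) :
    inner ℂ (AA A w) v = inner ℂ (A w.ofLp.1) v.ofLp.1 + inner ℂ (A w.ofLp.2) v.ofLp.2 := by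
  rw [WithLp.prod_inner_apply, AA, blk_apply_fst, blk_apply_snd]
  simp

theorem inner_AA_blk_apply (A P Q R S : H →L[ℂ] H) (v : WithLp 2 (H × H)) :
    inner ℂ (AA A (blk P Q R S v)) v =
      inner ℂ (A (P v.ofLp.1)) v.ofLp.1 + inner ℂ (A (Q v.ofLp.2)) v.ofLp.1 +
        inner ℂ (A (R v.ofLp.1)) v.ofLp.2 + inner ℂ (A (S v.ofLp.2)) v.ofLp.2 := by
  rw [inner_AA_apply, blk_apply_fst, blk_apply_snd, map_add, map_add, inner_add_left,
    inner_add_left]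
  ring

theorem vnormA_AA_sq {A : H →L[ℂ] H} (hA : A.IsPositive) (v : WithLp 2 (H × H)) :
    vnormA (AA A) v ^ 2 = vnormA A v.ofLp.1 ^ 2 + vnormA A v.ofLp.2 ^ 2 := by
  rw [vnormA_sq hA, vnormA_sq hA, vnormA, inner_AA_apply, map_add]
  exact Real.sq_sqrt (add_nonneg (hA.re_inner_nonneg_left _) (hA.re_inner_nonneg_left _))

theorem wA_AA_blk_le [CompleteSpace H] {A P Q R S : H →L[ℂ] H} (hA : A.IsPositive)
    (hP : ABounded A P) (hQ : ABounded A Q) (hR : ABounded A R) (hS : ABounded A S) :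
    wA (AA A) (blk P Q R S) ≤ (wA A P + opNormA A Q / 2) + (wA A S + opNormA A R / 2) := by
  have hwP := wA_nonneg A P
  have hwS := wA_nonneg A S
  have hQ0 := opNormA_nonneg A Q
  have hR0 := opNormA_nonneg A R
  refine Real.sSup_le ?_ (by positivity)
  rintro c ⟨v, hv, rfl⟩
  set a := vnormA A v.ofLp.1
  set b := vnormA A v.ofLp.2
  have hab : a ^ 2 + b ^ 2 = 1 := by rw [← vnormA_AA_sq hA, hv, one_pow]
  rw [inner_AA_blk_apply]
  calc _ ≤ ‖inner ℂ (A (P v.ofLp.1)) v.ofLp.1‖ + ‖inner ℂ (A (Q v.ofLp.2)) v.ofLp.1‖ +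
        ‖inner ℂ (A (R v.ofLp.1)) v.ofLp.2‖ + ‖inner ℂ (A (S v.ofLp.2)) v.ofLp.2‖ :=
        norm_add₄_le
    _ ≤ wA A P * a ^ 2 + opNormA A Q * b * a + opNormA A R * a * b + wA A S * b ^ 2 := by
        gcongr
        exacts [hP.norm_inner_le_wA hA _, hQ.norm_inner_apply_le hA _ _,
          hR.norm_inner_apply_le hA _ _, hS.norm_inner_le_wA hA _]
    _ = wA A P * a ^ 2 + (opNormA A Q + opNormA A R) * (a * b) + wA A S * b ^ 2 := by ring
    _ ≤ wA A P + (opNormA A Q + opNormA A R) / 2 + wA A S :=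
        mul_sq_add_mul_add_mul_sq_le hwP (add_nonneg hQ0 hR0) hwS hab
    _ = (wA A P + opNormA A Q / 2) + (wA A S + opNormA A R / 2) := by ring

end Block

theorem stmt10 {H : Type*} [NormedAddCommGroup H] [InnerProductSpace ℂ H] [CompleteSpace H]
    (A : H →L[ℂ] H) (hA : A.IsPositive)
    (P Q R S Ps Ss : H →L[ℂ] H)
    (hP : IsReducedAdjoint A P Ps) (hS : IsReducedAdjoint A S Ss)
    (hQ : ∃ Qs, IsReducedAdjoint A Q Qs) (hR : ∃ Rs, IsReducedAdjoint A R Rs) :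
    wA (AA A) (blk P Q R S) ≤
      Real.sqrt (2 * (wA A P) ^ 2 +
        (1 / 2) * (opNormA A (Ps ∘L Q) + (opNormA A Q) ^ 2)) +
      Real.sqrt (2 * (wA A S) ^ 2 +
        (1 / 2) * (opNormA A (Ss ∘L R) + (opNormA A R) ^ 2)) := by
  obtain ⟨Qs, hQ⟩ := hQ
  obtain ⟨Rs, hR⟩ := hR
  calc wA (AA A) (blk P Q R S)
      ≤ (wA A P + opNormA A Q / 2) + (wA A S + opNormA A R / 2) :=
        wA_AA_blk_le hA (hP.aBounded hA) (hQ.aBounded hA) (hR.aBounded hA) (hS.aBounded hA)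
    _ ≤ _ := add_le_add
        (add_half_le_sqrt _ _ (opNormA_nonneg A _))
        (add_half_le_sqrt _ _ (opNormA_nonneg A _))
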